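/- Let Γ be a finite abelian group. The map sending the class of a 2-cocycle τ : Γ × Γ → ℂˣ to the alternating form α(s,t) = τ(s,t)τ(t,s)⁻¹ induces a group isomorphism H²(Γ, ℂˣ) ≅ Hom(Λ²Γ, ℂˣ), i.e., an isomorphism onto the group of alternating bilinear forms Γ × Γ → ℂˣ. -/

import Mathlib

/-!
The form `τ s t * (τ t s)⁻¹` is bilinear by combining three instances of the cocycle identity.
For surjectivity, decompose `Γ` into cyclic factors with projections `π i`; an alternating form
vanishes on each cyclic factor, so `α = β * (βᵀ)⁻¹` for the bilinear form
`β x y = ∏_{i < j} α (π i x) (π j y)`, and a bilinear form is a normalized cocycle.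
For the kernel, a symmetric cocycle `σ` makes `Γ × A` with product
`(s, a) (t, b) = (s t, a b σ s t)` an abelian extension of `Γ` by `A`; when `A` is divisible it is
an injective `ℤ`-module, so the extension splits, and the splitting exhibits `σ` as a coboundary.
-/

/-- A normalized 2-cocycle on an abelian group `Γ` with values in `ℂˣ`. -/
def IsNormalizedCocycle {Γ : Type*} [CommGroup Γ] (τ : Γ → Γ → ℂˣ) : Prop :=
  (∀ s t u : Γ, τ s t * τ (s * t) u = τ t u * τ s (t * u)) ∧
    (∀ s : Γ, τ 1 s = 1) ∧ (∀ s : Γ, τ s 1 = 1)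

/-- A 2-coboundary. -/
def IsCoboundary {Γ : Type*} [CommGroup Γ] (τ : Γ → Γ → ℂˣ) : Prop :=
  ∃ ν : Γ → ℂˣ, ∀ s t : Γ, τ s t = ν s * ν t * (ν (s * t))⁻¹

/-- An alternating bilinear form on `Γ` with values in `ℂˣ`. -/
def IsAlternatingBilinear {Γ : Type*} [CommGroup Γ] (α : Γ → Γ → ℂˣ) : Prop :=
  (∀ x y z : Γ, α (x * y) z = α x z * α y z) ∧
    (∀ x y z : Γ, α x (y * z) = α x y * α x z) ∧ (∀ x : Γ, α x x = 1)

open Finset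

theorem mul_inv_swap_mul_left_of_cocycle {Γ A : Type*} [CommGroup Γ] [CommGroup A]
    {τ : Γ → Γ → A} (hc : ∀ s t u, τ s t * τ (s * t) u = τ t u * τ s (t * u)) (x y z : Γ) :
    τ (x * y) z * (τ z (x * y))⁻¹ = τ x z * (τ z x)⁻¹ * (τ y z * (τ z y)⁻¹) := by
  have e1 := congrArg Additive.ofMul (hc x y z)
  have e2 := congrArg Additive.ofMul (hc x z y)
  have e3 := congrArg Additive.ofMul (hc z x y)
  rw [mul_comm z y] at e2
  rw [mul_comm z x] at e3
  apply Additive.ofMul.injective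
  simp only [ofMul_mul, ofMul_inv] at e1 e2 e3 ⊢
  linear_combination (norm := abel) e1 - e2 + e3

section Alternating

variable {Γ M : Type*} [CommGroup Γ] [CommGroup M] {A : Γ →* Γ →* M}

theorem MonoidHom.apply_swap_of_alternating (hA : ∀ x, A x x = 1) (x y : Γ) :
    A y x = (A x y)⁻¹ := by
  have h := hA (x * y)
  rw [map_mul, map_mul, MonoidHom.mul_apply, MonoidHom.mul_apply, hA, hA, one_mul, mul_one]
    at h
  exact eq_inv_of_mul_eq_one_left h

theorem MonoidHom.apply_eq_one_of_mem_zpowers (hA : ∀ x, A x x = 1) {g x y : Γ}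
    (hx : x ∈ Subgroup.zpowers g) (hy : y ∈ Subgroup.zpowers g) : A x y = 1 := by
  obtain ⟨k, rfl⟩ := Subgroup.mem_zpowers_iff.mp hx
  obtain ⟨l, rfl⟩ := Subgroup.mem_zpowers_iff.mp hy
  rw [map_zpow, map_zpow, MonoidHom.zpow_apply, hA, one_zpow, one_zpow]

end Alternating

theorem CommGroup.exists_cyclic_projections (Γ : Type*) [CommGroup Γ] [Finite Γ] :
    ∃ (k : ℕ) (π : Fin k → Γ →* Γ), (∀ x, ∏ i, π i x = x) ∧
      ∀ i, ∃ g, ∀ x, π i x ∈ Subgroup.zpowers g := by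
  obtain ⟨ι, _, n, -, ⟨e⟩⟩ := CommGroup.equiv_prod_multiplicative_zmod_of_finite Γ
  classical
  let c := Fintype.equivFin ι
  let φ : ∀ i, Multiplicative (ZMod (n i)) →* Γ := fun i =>
    e.symm.toMonoidHom.comp (MonoidHom.mulSingle (fun i => Multiplicative (ZMod (n i))) i)
  refine ⟨_, fun i => (φ (c.symm i)).comp ((Pi.evalMonoidHom _ (c.symm i)).comp e.toMonoidHom),
    fun x => ?_, fun i => ?_⟩
  · simp only [φ, MonoidHom.comp_apply, Pi.evalMonoidHom_apply, MulEquiv.coe_toMonoidHom,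
      ← map_prod]
    rw [Equiv.prod_comp c.symm (fun i => MonoidHom.mulSingle _ i (e x i))]
    simp [univ_prod_mulSingle]
  · obtain ⟨g, hg⟩ := IsCyclic.exists_generator (α := Multiplicative (ZMod (n (c.symm i))))
    refine ⟨φ _ g, fun x => ?_⟩
    obtain ⟨m, hm⟩ := Subgroup.mem_zpowers_iff.mp (hg (e x (c.symm i)))
    exact ⟨m, by simp [← hm]⟩

theorem MonoidHom.exists_eq_mul_inv_flip_of_alternating {Γ M : Type*} [CommGroup Γ]
    [CommGroup M] [Finite Γ] {A : Γ →* Γ →* M} (hA : ∀ x, A x x = 1) :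
    ∃ B : Γ →* Γ →* M, ∀ x y, A x y = B x y * (B y x)⁻¹ := by
  obtain ⟨k, π, hπ, hcyc⟩ := CommGroup.exists_cyclic_projections Γ
  let B : Γ →* Γ →* M := ∏ i, ∏ j, if i < j then (A.comp (π i)).compl₂ (π j) else 1
  have hB : ∀ x y, B x y = ∏ i, ∏ j, if i < j then A (π i x) (π j y) else 1 := by
    intro x y
    simp only [B, MonoidHom.finsetProd_apply, apply_ite (fun f : Γ →* Γ →* M => f x y)]
    rfl
  refine ⟨B, fun x y => ?_⟩
  have hdiag : ∀ i j, A (π i x) (π j y) =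
      (if i < j then A (π i x) (π j y) else 1) * (if j < i then A (π i x) (π j y) else 1) := by
    intro i j
    rcases lt_trichotomy i j with hij | rfl | hij
    · simp [hij, hij.not_gt]
    · obtain ⟨g, hg⟩ := hcyc i
      simp [A.apply_eq_one_of_mem_zpowers hA (hg x) (hg y)]
    · simp [hij, hij.not_gt]
  have hflip : (∏ i, ∏ j, if j < i then A (π i x) (π j y) else 1) = (B y x)⁻¹ := by
    rw [hB, prod_comm, ← prod_inv_distrib]
    refine prod_congr rfl fun i _ => ?_
    rw [← prod_inv_distrib]
    refine prod_congr rfl fun j _ => ?_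
    split_ifs
    exacts [A.apply_swap_of_alternating hA _ _, inv_one.symm]
  calc A x y = ∏ i, ∏ j, A (π i x) (π j y) := by
        conv_lhs => rw [← hπ x, ← hπ y]
        simp only [map_prod, MonoidHom.finsetProd_apply]
        exact prod_comm
    _ = B x y * (B y x)⁻¹ := by
        rw [hB, ← hflip, ← prod_mul_distrib]
        refine prod_congr rfl fun i _ => ?_
        rw [← prod_mul_distrib]
        exact prod_congr rfl fun j _ => hdiag i j

noncomputable instance IsAlgClosed.rootableByUnits {k : Type*} [Field k] [IsAlgClosed k] :
    RootableBy kˣ ℤ :=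
  rootableByOfPowLeftSurj _ _ fun {n} hn z => by
    obtain ⟨w, hw⟩ := IsAlgClosed.exists_pow_nat_eq (z : k) (Int.natAbs_pos.mpr hn)
    have hw0 : w ≠ 0 := by
      rintro rfl
      exact z.ne_zero (by rw [← hw, zero_pow (Int.natAbs_pos.mpr hn).ne'])
    have hu : Units.mk0 w hw0 ^ n.natAbs = z := Units.ext (by simpa using hw)
    rcases Int.natAbs_eq n with hn | hn
    · exact ⟨Units.mk0 w hw0, by dsimp only; rw [hn, zpow_natCast, hu]⟩
    · exact ⟨(Units.mk0 w hw0)⁻¹, by dsimp only; rw [hn, inv_zpow', neg_neg, zpow_natCast, hu]⟩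

theorem MonoidHom.exists_leftInverse_of_injective {A E : Type*} [CommGroup A] [CommGroup E]
    [RootableBy A ℤ] (i : A →* E) (hi : Function.Injective i) :
    ∃ r : E →* A, ∀ a, r (i a) = a := by
  let : DivisibleBy (Additive A) ℤ :=
    divisibleByOfSMulRightSurj _ _ fun hn => RootableBy.surjective_pow A ℤ hn
  obtain ⟨r, hr⟩ := (Module.Baer.of_divisible (Additive A)).extension_property_addMonoidHom
    (MonoidHom.toAdditive i) hi (AddMonoidHom.id _)
  exact ⟨MonoidHom.toAdditive.symm r, fun a => DFunLike.congr_fun hr (Additive.ofMul a)⟩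

structure SymmetricCocycle (Γ A : Type*) [CommGroup Γ] [CommGroup A] where
  toFun : Γ → Γ → A
  map_one_left : ∀ t, toFun 1 t = 1
  cocycle : ∀ s t u, toFun s t * toFun (s * t) u = toFun t u * toFun s (t * u)
  symm : ∀ s t, toFun s t = toFun t s

namespace SymmetricCocycle

variable {Γ A : Type*} [CommGroup Γ] [CommGroup A] (σ : SymmetricCocycle Γ A)

theorem map_one_right (s : Γ) : σ.toFun s 1 = 1 := by
  rw [σ.symm, σ.map_one_left]

def Extension (_σ : SymmetricCocycle Γ A) : Type _ := Γ × A

instance : CommGroup σ.Extension where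
  mul p q := (p.1 * q.1, p.2 * q.2 * σ.toFun p.1 q.1)
  one := (1, 1)
  inv p := (p.1⁻¹, (p.2 * σ.toFun p.1⁻¹ p.1)⁻¹)
  mul_assoc p q r := by
    refine Prod.ext (mul_assoc p.1 q.1 r.1) ?_
    show p.2 * q.2 * σ.toFun p.1 q.1 * r.2 * σ.toFun (p.1 * q.1) r.1 =
      p.2 * (q.2 * r.2 * σ.toFun q.1 r.1) * σ.toFun p.1 (q.1 * r.1)
    calc _ = p.2 * q.2 * r.2 * (σ.toFun p.1 q.1 * σ.toFun (p.1 * q.1) r.1) := by ac_rfl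
      _ = p.2 * q.2 * r.2 * (σ.toFun q.1 r.1 * σ.toFun p.1 (q.1 * r.1)) := by rw [σ.cocycle]
      _ = _ := by ac_rfl
  one_mul p := Prod.ext (one_mul p.1) (by
    show 1 * p.2 * σ.toFun 1 p.1 = p.2
    rw [σ.map_one_left, one_mul, mul_one])
  mul_one p := Prod.ext (mul_one p.1) (by
    show p.2 * 1 * σ.toFun p.1 1 = p.2
    rw [σ.map_one_right, mul_one, mul_one])
  inv_mul_cancel p := Prod.ext (inv_mul_cancel p.1) (by
    show (p.2 * σ.toFun p.1⁻¹ p.1)⁻¹ * p.2 * σ.toFun p.1⁻¹ p.1 = 1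
    rw [mul_assoc, mul_comm p.2, inv_mul_cancel])
  mul_comm p q := Prod.ext (mul_comm p.1 q.1) (by
    show p.2 * q.2 * σ.toFun p.1 q.1 = q.2 * p.2 * σ.toFun q.1 p.1
    rw [mul_comm p.2, σ.symm])

def pair (s : Γ) (a : A) : σ.Extension := (s, a)

def inclusion : A →* σ.Extension where
  toFun := σ.pair 1
  map_one' := rfl
  map_mul' a b := Prod.ext (one_mul 1).symm (by
    show a * b = a * b * σ.toFun 1 1
    rw [σ.map_one_left, mul_one])

theorem exists_eq_coboundary [RootableBy A ℤ] :
    ∃ ν : Γ → A, ∀ s t, σ.toFun s t = ν s * ν t * (ν (s * t))⁻¹ := by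
  obtain ⟨r, hr⟩ := σ.inclusion.exists_leftInverse_of_injective
    fun a b hab => by injection hab
  refine ⟨fun s => r (σ.pair s 1), fun s t => ?_⟩
  have hsplit : σ.pair s 1 * σ.pair t 1 = σ.pair (s * t) 1 * σ.inclusion (σ.toFun s t) :=
    Prod.ext (mul_one _).symm (by
      show 1 * 1 * σ.toFun s t = 1 * σ.toFun s t * σ.toFun (s * t) 1
      rw [σ.map_one_right, one_mul, one_mul, mul_one])
  dsimp only
  rw [← map_mul, hsplit, map_mul, hr, mul_comm (r _), mul_inv_cancel_right]

end SymmetricCocycle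

theorem IsNormalizedCocycle.isAlternatingBilinear {Γ : Type*} [CommGroup Γ] {τ : Γ → Γ → ℂˣ}
    (h : IsNormalizedCocycle τ) : IsAlternatingBilinear fun s t => τ s t * (τ t s)⁻¹ := by
  have hswap : ∀ a b, (τ a b * (τ b a)⁻¹)⁻¹ = τ b a * (τ a b)⁻¹ := fun a b => by
    rw [mul_inv, inv_inv, mul_comm]
  refine ⟨mul_inv_swap_mul_left_of_cocycle h.1, fun x y z => ?_, fun x => mul_inv_cancel _⟩
  dsimp only
  rw [← hswap (y * z), mul_inv_swap_mul_left_of_cocycle h.1, mul_inv, hswap, hswap]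

theorem IsNormalizedCocycle.isCoboundary_of_symm {Γ : Type*} [CommGroup Γ] {τ : Γ → Γ → ℂˣ}
    (h : IsNormalizedCocycle τ) (hsym : ∀ s t, τ s t = τ t s) : IsCoboundary τ :=
  (SymmetricCocycle.mk τ h.2.1 h.1 hsym).exists_eq_coboundary

theorem IsCoboundary.symm {Γ : Type*} [CommGroup Γ] {τ : Γ → Γ → ℂˣ} (h : IsCoboundary τ)
    (s t : Γ) : τ s t = τ t s := by
  obtain ⟨ν, hν⟩ := h
  rw [hν, hν, mul_comm t, mul_comm (ν s)]

def IsAlternatingBilinear.toMonoidHom {Γ : Type*} [CommGroup Γ] {α : Γ → Γ → ℂˣ}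
    (h : IsAlternatingBilinear α) : Γ →* Γ →* ℂˣ :=
  MonoidHom.mk' (fun x => MonoidHom.mk' (α x) (h.2.1 x)) fun x y => MonoidHom.ext (h.1 x y)

theorem isNormalizedCocycle_of_monoidHom {Γ : Type*} [CommGroup Γ] (B : Γ →* Γ →* ℂˣ) :
    IsNormalizedCocycle fun s t => B s t := by
  refine ⟨fun s t u => ?_, fun s => by simp, fun s => by simp⟩
  simp only [map_mul, MonoidHom.mul_apply]
  ac_rfl

theorem stmt_5 (Γ : Type*) [CommGroup Γ] [Fintype Γ] :
    -- the map is well defined: the associated form of a cocycle is alternating bilinear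
    (∀ τ : Γ → Γ → ℂˣ, IsNormalizedCocycle τ →
        IsAlternatingBilinear fun s t => τ s t * (τ t s)⁻¹) ∧
    -- it is surjective onto alternating bilinear forms
    (∀ α : Γ → Γ → ℂˣ, IsAlternatingBilinear α →
        ∃ τ : Γ → Γ → ℂˣ, IsNormalizedCocycle τ ∧
          ∀ s t : Γ, α s t = τ s t * (τ t s)⁻¹) ∧
    -- its kernel consists exactly of the coboundaries, so it induces an
    -- isomorphism H²(Γ, ℂˣ) ≅ Hom(Λ²Γ, ℂˣ)
    (∀ τ : Γ → Γ → ℂˣ, IsNormalizedCocycle τ →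
        ((∀ s t : Γ, τ s t * (τ t s)⁻¹ = 1) ↔ IsCoboundary τ)) := by
  refine ⟨fun τ h => h.isAlternatingBilinear, fun α hα => ?_, fun τ h => ⟨fun hker => ?_,
    fun hcob s t => mul_inv_eq_one.mpr (hcob.symm s t)⟩⟩
  · obtain ⟨B, hB⟩ :=
      MonoidHom.exists_eq_mul_inv_flip_of_alternating (A := hα.toMonoidHom) hα.2.2
    exact ⟨fun s t => B s t, isNormalizedCocycle_of_monoidHom B, hB⟩
  · exact h.isCoboundary_of_symm fun s t => mul_inv_eq_one.mp (hker s t)
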